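/- If S_max ≥ γ(1+γ)^{K−1} for γ > 0, then the tuple S_k = S_max/(1+γ)^{k−1} for k ∈ [K−1] together with S_K = S_max/((1+γ)^{K−2}γ) − 1 satisfies S_K ≥ γ and, for each k ∈ [K−1], S_k = γ(Σ_{i=k+1}^K S_i + 1) holds with equality; i.e., the upper-bound SNR profile meets every SINR constraint with equality. -/

import Mathlib

/-! With `x = 1 + γ`, the shifted tail sums `1 + ∑_{i > k} S_i` equal `Smax / (x^k γ)`: this holds
for the last index by the choice of `S_K`, and descends because
`Smax / x^k + Smax / (x^k γ) = Smax / (x^(k-1) γ)`. Multiplying by `γ` gives `S_k`. -/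

open Finset

theorem Fin.sum_Ioi_val {M : Type*} [AddCommMonoid M] {n : ℕ} (f : ℕ → M) (k : Fin (n + 1)) :
    ∑ i ∈ Ioi k, f i = ∑ i ∈ Ioc (k : ℕ) n, f i := by
  rw [← Ioo_add_one_right_eq_Ioc, ← Fin.map_valEmbedding_Ioi, sum_map]
  rfl

theorem sum_Ioc_div_pow_add_div {γ : ℝ} (hγ : γ ≠ 0) (hx : 1 + γ ≠ 0) (c : ℝ) {k m : ℕ}
    (hkm : k ≤ m) :
    ∑ i ∈ Ioc k m, c / (1 + γ) ^ i + c / ((1 + γ) ^ m * γ) = c / ((1 + γ) ^ k * γ) := by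
  induction m, hkm using Nat.le_induction with
  | base => simp
  | succ m hkm ih =>
    rw [sum_Ioc_succ_top hkm, ← ih]
    field_simp
    ring

/-- the upper-bound SNR profile `S_k = S_max/(1+γ)^(k−1)` for `k < K` and
`S_K = S_max/((1+γ)^(K−2)γ) − 1` meets every SINR constraint with equality
whenever `S_max ≥ γ(1+γ)^(K−1)`. -/
theorem upper_bound_profile_tight (K : ℕ) (hK : 2 ≤ K) (γ Smax : ℝ)
    (hγ : 0 < γ) (hSmax : Smax ≥ γ * (1 + γ) ^ (K - 1)) :
    let S : Fin K → ℝ := fun k =>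
      if (k : ℕ) = K - 1 then Smax / ((1 + γ) ^ (K - 2) * γ) - 1
      else Smax / (1 + γ) ^ (k : ℕ)
    S ⟨K - 1, by omega⟩ ≥ γ ∧
    ∀ k : Fin K, (k : ℕ) < K - 1 →
      S k = γ * ((∑ i ∈ univ.filter (fun i => k < i), S i) + 1) := by
  obtain ⟨m, rfl⟩ : ∃ m, K = m + 2 := ⟨K - 2, by omega⟩
  intro S
  set g : ℕ → ℝ := fun j => if j = m + 1 then Smax / ((1 + γ) ^ m * γ) - 1 else Smax / (1 + γ) ^ j
  have hS : S = fun i : Fin (m + 2) => g i := rfl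
  have hx : 1 + γ ≠ 0 := by positivity
  refine ⟨?_, fun k hk => ?_⟩
  · have hpos : 0 < (1 + γ) ^ m * γ := by positivity
    have hSK : S ⟨m + 2 - 1, by omega⟩ = Smax / ((1 + γ) ^ m * γ) - 1 := if_pos rfl
    rw [ge_iff_le, hSK, le_sub_iff_add_le, le_div_iff₀ hpos]
    calc (γ + 1) * ((1 + γ) ^ m * γ) = γ * (1 + γ) ^ (m + 1) := by ring
      _ ≤ Smax := hSmax
  · have hkm : (k : ℕ) ≤ m := by omega
    have htail : ∑ i ∈ univ.filter (fun i => k < i), S i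
        = ∑ i ∈ Ioc (k : ℕ) m, Smax / (1 + γ) ^ i + (Smax / ((1 + γ) ^ m * γ) - 1) := by
      rw [hS, filter_lt_eq_Ioi, Fin.sum_Ioi_val, sum_Ioc_succ_top hkm]
      exact congrArg₂ (· + ·)
        (sum_congr rfl fun i hi => if_neg (Nat.lt_succ_of_le (mem_Ioc.1 hi).2).ne) (if_pos rfl)
    have hSk : S k = Smax / (1 + γ) ^ (k : ℕ) := if_neg (by omega)
    rw [htail, hSk, add_sub_assoc', sub_add_cancel, sum_Ioc_div_pow_add_div hγ.ne' hx _ hkm]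
    field_simp
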